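/- Let A be a two-sided brace, X an ideal of A, and g: A → A a map with g(A) ⊆ X and g(a+x) = g(a) for all a ∈ A, x ∈ X. Then k: A → A, k(x) = x + x*g(x), is a reflection of (A, r_A). -/
import Mathlib


/-- A left brace structure on an additive abelian group: a group operation
`circ` (with inverse `inv`, whose identity is 0) satisfying the left brace
compatibility a∘(b+c) = a∘b - a + a∘c. -/
structure LeftBrace (A : Type*) [AddCommGroup A] where
  circ : A → A → A
  inv : A → A
  circ_assoc : ∀ a b c, circ (circ a b) c = circ a (circ b c)
  circ_zero : ∀ a, circ a 0 = a
  zero_circ : ∀ a, circ 0 a = a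
  circ_inv : ∀ a, circ a (inv a) = 0
  inv_circ : ∀ a, circ (inv a) a = 0
  compat : ∀ a b c, circ a (b + c) = circ a b - a + circ a c

namespace LeftBrace

variable {A : Type*} [AddCommGroup A] (B : LeftBrace A)

/-- λ_a(b) = -a + a∘b. -/
def lam (a b : A) : A := -a + B.circ a b

/-- a*b = λ_a(b) - b. -/
def star (a b : A) : A := B.lam a b - b

/-- μ_b(a) = λ_a(b)ʹ ∘ a ∘ b. -/
def mu (b a : A) : A := B.circ (B.inv (B.lam a b)) (B.circ a b)

/-- A left brace is two-sided if (a+b)∘c = a∘c - c + b∘c. -/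
def IsTwoSided : Prop := ∀ a b c : A, B.circ (a + b) c = B.circ a c - c + B.circ b c

/-- The Yang–Baxter map r_A(a,b) = (λ_a(b), μ_b(a)) associated to a left brace. -/
def rmap : A × A → A × A := fun p => (B.lam p.1 p.2, B.mu p.2 p.1)

/-- `r × id` acting on triples. -/
def r1map {X : Type*} (r : X × X → X × X) : X × X × X → X × X × X :=
  fun p => ((r (p.1, p.2.1)).1, (r (p.1, p.2.1)).2, p.2.2)

/-- `id × r` acting on triples. -/
def r2map {X : Type*} (r : X × X → X × X) : X × X × X → X × X × X :=
  fun p => (p.1, r p.2)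

/-- `id × k` on pairs. -/
def k2map {X : Type*} (k : X → X) : X × X → X × X := fun p => (p.1, k p.2)

/-- `k × id` on pairs. -/
def k1map {X : Type*} (k : X → X) : X × X → X × X := fun p => (k p.1, p.2)

end LeftBrace

open LeftBrace

section Aux
variable {A : Type*} [AddCommGroup A] (B : LeftBrace A)

lemma lam_add' (a b c : A) : B.lam a (b + c) = B.lam a b + B.lam a c := by
  simp only [LeftBrace.lam, B.compat]; abel

lemma lam_zero' (a : A) : B.lam a 0 = 0 := by
  simp [LeftBrace.lam, B.circ_zero]

lemma zero_lam' (b : A) : B.lam 0 b = b := by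
  simp [LeftBrace.lam, B.zero_circ]

lemma lam_neg' (a b : A) : B.lam a (-b) = -B.lam a b := by
  have h : B.lam a b + B.lam a (-b) = 0 := by
    rw [← lam_add', add_neg_cancel, lam_zero']
  exact eq_neg_of_add_eq_zero_right h

lemma lam_sub' (a b c : A) : B.lam a (b - c) = B.lam a b - B.lam a c := by
  rw [sub_eq_add_neg, lam_add', lam_neg', sub_eq_add_neg]

lemma circ_eq' (a b : A) : B.circ a b = a + B.lam a b := by
  simp [LeftBrace.lam]

lemma lam_lam' (a b c : A) : B.lam a (B.lam b c) = B.lam (B.circ a b) c := by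
  have h : B.lam b c = -b + B.circ b c := rfl
  rw [h, lam_add', lam_neg']
  simp only [LeftBrace.lam, B.circ_assoc]
  abel

lemma inv_inv' (a : A) : B.inv (B.inv a) = a := by
  have h : B.circ (B.circ (B.inv (B.inv a)) (B.inv a)) a = a := by
    rw [B.inv_circ, B.zero_circ]
  rwa [B.circ_assoc, B.inv_circ, B.circ_zero] at h

lemma lam_inv_lam' (a b : A) : B.lam (B.inv a) (B.lam a b) = b := by
  rw [lam_lam', B.inv_circ, zero_lam']

lemma lam_lam_inv' (a b : A) : B.lam a (B.lam (B.inv a) b) = b := by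
  rw [lam_lam', B.circ_inv, zero_lam']

lemma lam_eq_star' (a b : A) : B.lam a b = b + B.star a b := by
  simp [LeftBrace.star]

lemma star_add_right' (hB : B.IsTwoSided) (a b c : A) :
    B.star (a + b) c = B.star a c + B.star b c := by
  have hB' : ∀ a b c : A, B.circ (a+b) c = B.circ a c - c + B.circ b c := hB
  simp only [LeftBrace.star, LeftBrace.lam, hB']; abel

lemma star_zero_left' (c : A) : B.star 0 c = 0 := by
  simp [LeftBrace.star, zero_lam']

lemma star_sub_right' (hB : B.IsTwoSided) (a b c : A) :
    B.star (a - b) c = B.star a c - B.star b c := by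
  have h : B.star (a - b) c + B.star b c = B.star a c := by
    rw [← star_add_right' B hB, sub_add_cancel]
  exact eq_sub_of_add_eq h

end Aux

section Aux2
variable {A : Type*} [AddCommGroup A] (B : LeftBrace A)

lemma lam_star' (hB : B.IsTwoSided) (c d h : A) :
    B.lam c (B.star d h) = B.star (B.lam c d) h := by
  have h1 : B.star d h = B.lam d h - h := rfl
  have h2 : B.lam c d = B.circ c d - c := by rw [circ_eq']; abel
  rw [h1, lam_sub', lam_lam', h2, star_sub_right' B hB,
    lam_eq_star' B (B.circ c d) h, lam_eq_star' B c h]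
  abel

lemma mu_eq' (b a : A) : B.mu b a = B.lam (B.inv (B.lam a b)) a := by
  show B.circ (B.inv (B.lam a b)) (B.circ a b) = B.lam (B.inv (B.lam a b)) a
  rw [circ_eq' B a b, B.compat, B.inv_circ]
  simp only [LeftBrace.lam]
  abel

variable (X : AddSubgroup A)

lemma star_mem_right' (hleft : ∀ a : A, ∀ x ∈ X, B.lam a x ∈ X)
    {x : A} (a : A) (hx : x ∈ X) : B.star a x ∈ X :=
  sub_mem (hleft a x hx) hx

lemma star_mem_left' (hleft : ∀ a : A, ∀ x ∈ X, B.lam a x ∈ X)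
    (hnormal : ∀ a : A, ∀ x ∈ X, B.circ (B.circ a x) (B.inv a) ∈ X)
    {x : A} (a : A) (hx : x ∈ X) : B.star x a ∈ X := by
  have hy : B.circ (B.circ (B.inv a) x) a ∈ X := by
    have := hnormal (B.inv a) x hx
    rwa [inv_inv'] at this
  have key : B.circ x a = B.circ a (B.circ (B.circ (B.inv a) x) a) := by
    rw [← B.circ_assoc, ← B.circ_assoc, B.circ_inv, B.zero_circ]
  have heq : B.star x a = B.lam a (B.circ (B.circ (B.inv a) x) a) - x := by
    simp only [LeftBrace.star, LeftBrace.lam]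
    rw [key]
    abel
  rw [heq]
  exact sub_mem (hleft a _ hy) hx

lemma inv_sub_mem' (hleft : ∀ a : A, ∀ x ∈ X, B.lam a x ∈ X)
    (hnormal : ∀ a : A, ∀ x ∈ X, B.circ (B.circ a x) (B.inv a) ∈ X)
    {u s : A} (hus : u - s ∈ X) : B.inv u - B.inv s ∈ X := by
  have he : B.circ (B.inv u) s ∈ X := by
    have h1 : B.circ (B.inv u) s = B.lam (B.inv u) (s - u) := by
      nth_rewrite 1 [show s = u + (s - u) by abel]
      rw [B.compat, B.inv_circ]
      simp only [LeftBrace.lam]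
      abel
    rw [h1]
    exact hleft _ _ (by simpa using neg_mem hus)
  have h2 : B.inv u = B.circ (B.circ (B.inv u) s) (B.inv s) := by
    rw [B.circ_assoc, B.circ_inv, B.circ_zero]
  have h3 : B.inv u - B.inv s
      = B.circ (B.inv u) s + B.star (B.circ (B.inv u) s) (B.inv s) := by
    nth_rewrite 1 [h2]
    rw [circ_eq' B _ (B.inv s), lam_eq_star' B _ (B.inv s)]
    abel
  rw [h3]
  exact add_mem he (star_mem_left' B X hleft hnormal _ he)

lemma lam_sub_mem' (hB : B.IsTwoSided)
    (hleft : ∀ a : A, ∀ x ∈ X, B.lam a x ∈ X)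
    (hnormal : ∀ a : A, ∀ x ∈ X, B.circ (B.circ a x) (B.inv a) ∈ X)
    {c d : A} (e : A) (hcd : c - d ∈ X) : B.lam c e - B.lam d e ∈ X := by
  have h : B.lam c e - B.lam d e = B.star (c - d) e := by
    rw [star_sub_right' B hB, lam_eq_star' B c e, lam_eq_star' B d e]
    abel
  rw [h]
  exact star_mem_left' B X hleft hnormal _ hcd

end Aux2

/-- Corollary 2.8: let A be a two-sided brace, X an ideal of A, and g : A → A
with g(A) ⊆ X and g(a+x) = g(a) for x ∈ X. Then k(x) = x + x*g(x) is a
reflection of (A, r_A). -/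
theorem statement9 {A : Type*} [AddCommGroup A] (B : LeftBrace A)
    (hB : B.IsTwoSided) (X : AddSubgroup A)
    (hleft : ∀ a : A, ∀ x ∈ X, B.lam a x ∈ X)
    (hnormal : ∀ a : A, ∀ x ∈ X, B.circ (B.circ a x) (B.inv a) ∈ X)
    (g : A → A) (hg : ∀ a : A, g a ∈ X)
    (hg' : ∀ a : A, ∀ x ∈ X, g (a + x) = g a) :
    B.rmap ∘ k2map (fun x => x + B.star x (g x)) ∘ B.rmap ∘
        k2map (fun x => x + B.star x (g x)) =
      k2map (fun x => x + B.star x (g x)) ∘ B.rmap ∘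
        k2map (fun x => x + B.star x (g x)) ∘ B.rmap := by
  set k : A → A := fun x => x + B.star x (g x) with hk
  have hkb : ∀ z : A, k z = z + B.star z (g z) := fun z => rfl
  have hgc : ∀ c d : A, c - d ∈ X → g c = g d := by
    intro c d h
    have h2 := hg' d (c - d) h
    rwa [show d + (c - d) = c by abel] at h2
  funext p
  obtain ⟨a, b⟩ := p
  simp only [Function.comp_apply, LeftBrace.k2map, LeftBrace.rmap, mu_eq']
  set s := B.lam a b with hs
  set u := B.lam a (k b) with hu
  set t := B.lam (B.inv s) a with ht
  set v := B.lam (B.inv u) a with hv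
  have husx : u - s = B.star s (g b) := by
    rw [hu, hs, ← lam_sub' B a (k b) b,
      show k b - b = B.star b (g b) by rw [hkb b]; abel, lam_star' B hB]
  have hus : u - s ∈ X := by
    rw [husx]; exact star_mem_right' B X hleft s (hg b)
  have hvt : v - t ∈ X := by
    rw [hv, ht]
    exact lam_sub_mem' B X hB hleft hnormal a (inv_sub_mem' B X hleft hnormal hus)
  have hgv : g v = g t := hgc v t hvt
  have hluv : B.lam u v = a := by rw [hv]; exact lam_lam_inv' B u a
  have hlst : B.lam s t = a := by rw [ht]; exact lam_lam_inv' B s a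
  have E1u : B.lam u (k v) = a + B.star a (g t) := by
    rw [hkb v, lam_add' B u v (B.star v (g v)), lam_star' B hB u v (g v), hluv, hgv]
  have E1s : B.lam s (k t) = a + B.star a (g t) := by
    rw [hkb t, lam_add' B s t (B.star t (g t)), lam_star' B hB s t (g t), hlst]
  have hwa : (a + B.star a (g t)) - a ∈ X := by
    rw [show (a + B.star a (g t)) - a = B.star a (g t) by abel]
    exact star_mem_right' B X hleft a (hg t)
  have hpb : B.lam (B.inv (a + B.star a (g t))) s - b ∈ X := by
    have h1 : B.lam (B.inv (a + B.star a (g t))) s - B.lam (B.inv a) s ∈ X :=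
      lam_sub_mem' B X hB hleft hnormal s (inv_sub_mem' B X hleft hnormal hwa)
    have h2 : B.lam (B.inv a) s = b := by rw [hs]; exact lam_inv_lam' B a b
    rwa [h2] at h1
  have hgp : g (B.lam (B.inv (a + B.star a (g t))) s) = g b := hgc _ _ hpb
  have E2 : B.lam (B.inv (a + B.star a (g t))) u
      = k (B.lam (B.inv (a + B.star a (g t))) s) := by
    have hu2 : u = s + B.star s (g b) := by rw [← husx]; abel
    rw [hkb (B.lam (B.inv (a + B.star a (g t))) s), hgp, hu2,
      lam_add' B _ s (B.star s (g b)), lam_star' B hB _ s (g b)]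
  rw [E1u, E1s, E2]
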